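/- arXiv:math/0509450 — 5 statements merged into one kernel-verified Lean document; each statement's English description precedes it below -/
import Mathlib

section
/- Let Γ be a group acting by homeomorphisms on a Hausdorff topological space L. If the action is (i) minimal, (ii) strongly faithful, and (iii) strongly hyperbolic, then Γ is a Powers group. -/
noncomputable section

open scoped ENNReal

/-- A group `Γ` has the Powers property if for every finite subset `F` of `Γ \\ {1}` and
every integer `N ≥ 1` there are a partition `Γ = C ⊔ D` and elements `γ₁, …, γ_N ∈ Γ` such
that `f·C ∩ C = ∅` for all `f ∈ F` and `γ_j·D ∩ γ_k·D = ∅` for all `j ≠ k`. -/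
def IsPowersGroup (Γ : Type*) [Group Γ] : Prop :=
  ∀ F : Finset Γ, (1 : Γ) ∉ F → ∀ N : ℕ, 1 ≤ N →
    ∃ (C D : Set Γ) (γ : Fin N → Γ),
      C ∪ D = Set.univ ∧ Disjoint C D ∧
      (∀ f ∈ F, Disjoint ((f * ·) '' C) C) ∧
      ∀ j k : Fin N, j ≠ k → Disjoint ((γ j * ·) '' D) ((γ k * ·) '' D)

/-- An element `g` of a group acting on a topological space `L` acts as a hyperbolic
homeomorphism if it has two fixed points `s ≠ r` (the source and the range) such that
for all neighbourhoods `S` of `s` and `R` of `r` there is `n₀` with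
`gⁿ(L ∖ S) ⊆ R` and `g⁻ⁿ(L ∖ R) ⊆ S` for all `n ≥ n₀`. -/
def IsHyperbolicSMul (L : Type*) {Γ : Type*} [Group Γ] [TopologicalSpace L]
    [MulAction Γ L] (g : Γ) : Prop :=
  ∃ s r : L, s ≠ r ∧ g • s = s ∧ g • r = r ∧
    ∀ S ∈ nhds s, ∀ R ∈ nhds r, ∃ n₀ : ℕ, ∀ n ≥ n₀,
      (fun x : L => (g ^ n) • x) '' Sᶜ ⊆ R ∧ (fun x : L => (g ^ n)⁻¹ • x) '' Rᶜ ⊆ S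

lemma exists_disjoint_opens {L ι : Type*} [TopologicalSpace L] [T2Space L] [Finite ι]
    (p : ι → L) (hp : Function.Injective p) :
    ∃ O : ι → Set L, (∀ i, IsOpen (O i)) ∧ (∀ i, p i ∈ O i) ∧
      ∀ i j, i ≠ j → Disjoint (O i) (O j) := by
  classical
  have sep : ∀ i j : ι, ∃ uv : Set L × Set L,
      i ≠ j → IsOpen uv.1 ∧ IsOpen uv.2 ∧ p i ∈ uv.1 ∧ p j ∈ uv.2 ∧ Disjoint uv.1 uv.2 := by
    intro i j
    by_cases h : i = j
    · exact ⟨(Set.univ, Set.univ), fun hc => absurd h hc⟩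
    · obtain ⟨u, v, hu, hv, hpu, hpv, huv⟩ := t2_separation (hp.ne h)
      exact ⟨(u, v), fun _ => ⟨hu, hv, hpu, hpv, huv⟩⟩
  choose AB hAB using sep
  refine ⟨fun i => ⋂ j, if h : i = j then Set.univ else (AB i j).1 ∩ (AB j i).2,
    fun i => ?_, fun i => ?_, fun i j hij => ?_⟩
  · refine isOpen_iInter_of_finite fun j => ?_
    by_cases h : i = j
    · simp [h]
    · simpa [h] using ((hAB i j h).1.inter (hAB j i (Ne.symm h)).2.1)
  · refine Set.mem_iInter.2 fun j => ?_
    by_cases h : i = j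
    · simp [h]
    · simpa [h] using ⟨(hAB i j h).2.2.1, (hAB j i (Ne.symm h)).2.2.2.1⟩
  · have h1 : (⋂ k, if h : i = k then Set.univ else (AB i k).1 ∩ (AB k i).2)
        ⊆ (AB i j).1 := by
      intro x hx
      have := Set.mem_iInter.1 hx j
      rw [dif_neg hij] at this
      exact this.1
    have h2 : (⋂ k, if h : j = k then Set.univ else (AB j k).1 ∩ (AB k j).2)
        ⊆ (AB i j).2 := by
      intro x hx
      have := Set.mem_iInter.1 hx i
      rw [dif_neg (Ne.symm hij)] at this
      exact this.2
    exact Set.disjoint_of_subset h1 h2 (hAB i j hij).2.2.2.2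

/-- Proposition 11: if a group `Γ` acts by homeomorphisms on a Hausdorff space `L` and the
action is minimal, strongly faithful and strongly hyperbolic, then `Γ` is a Powers group. -/
theorem isPowersGroup_of_minimal_stronglyFaithful_stronglyHyperbolic
    {Γ L : Type*} [Group Γ] [TopologicalSpace L] [T2Space L] [MulAction Γ L]
    (hcont : ∀ g : Γ, Continuous fun x : L => g • x)
    (hmin : ∀ x : L, Dense (MulAction.orbit Γ x))
    (hfaith : ∀ F : Finset Γ, (1 : Γ) ∉ F → ∃ y : L, ∀ f ∈ F, f • y ≠ y)
    (hhyp : ∀ N : ℕ, 1 ≤ N → ∃ g : Fin N → Γ,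
      (∀ j, IsHyperbolicSMul L (g j)) ∧
      ∀ j k : Fin N, j ≠ k → ∀ x : L, ¬(g j • x = x ∧ g k • x = x)) :
    IsPowersGroup Γ := by
  classical
  intro F hF N hN
  -- Step 1: the point y and the neighbourhood U
  obtain ⟨y, hy⟩ := hfaith F hF
  have sep : ∀ f : Γ, ∃ vw : Set L × Set L, IsOpen vw.1 ∧ IsOpen vw.2 ∧ y ∈ vw.2 ∧
      (f ∈ F → f • y ∈ vw.1 ∧ Disjoint vw.1 vw.2) := by
    intro f
    by_cases hf : f ∈ F
    · obtain ⟨u, v, hu, hv, hfu, hyv, huv⟩ := t2_separation (hy f hf)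
      exact ⟨(u, v), hu, hv, hyv, fun _ => ⟨hfu, huv⟩⟩
    · exact ⟨(Set.univ, Set.univ), isOpen_univ, isOpen_univ, Set.mem_univ y,
        fun h => absurd h hf⟩
  choose VW hV hW hyW hFf using sep
  set U : Set L := ⋂ f ∈ F, ((VW f).2 ∩ (fun x : L => f • x) ⁻¹' (VW f).1) with hUdef
  have hUopen : IsOpen U := by
    refine isOpen_biInter_finset fun f _ => (hW f).inter ((hV f).preimage (hcont f))
  have hyU : y ∈ U := by
    refine Set.mem_iInter₂.2 fun f hf => ⟨hyW f, ?_⟩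
    exact (hFf f hf).1
  have hUF : ∀ f ∈ F, ∀ x ∈ U, f • x ∉ U := by
    intro f hf x hx hfx
    have h1 : f • x ∈ (VW f).1 := (Set.mem_iInter₂.1 hx f hf).2
    have h2 : f • x ∈ (VW f).2 := (Set.mem_iInter₂.1 hfx f hf).1
    exact Set.disjoint_left.1 (hFf f hf).2 h1 h2
  -- Step 2: N+1 transverse hyperbolic elements, conjugated so that r' 0 ∈ U
  obtain ⟨g, hghyp, htrans⟩ := hhyp (N + 1) (by omega)
  choose s r hsr hfs hfr hdyn using hghyp
  obtain ⟨x0, hx0orb, hx0U⟩ := (hmin (r 0)).exists_mem_open hUopen ⟨y, hyU⟩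
  obtain ⟨t, ht⟩ := MulAction.mem_orbit_iff.1 hx0orb
  set g' : Fin (N + 1) → Γ := fun i => t * g i * t⁻¹ with hg'def
  set s' : Fin (N + 1) → L := fun i => t • s i with hs'def
  set r' : Fin (N + 1) → L := fun i => t • r i with hr'def
  have hr'0U : r' 0 ∈ U := by rw [hr'def]; simpa [ht] using hx0U
  -- the 2(N+1) fixed points are pairwise distinct
  set p0 : Fin (N + 1) × Bool → L := fun q => cond q.2 (r q.1) (s q.1) with hp0def
  have hfix : ∀ q : Fin (N + 1) × Bool, g q.1 • p0 q = p0 q := by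
    rintro ⟨i, (_ | _)⟩
    · exact hfs i
    · exact hfr i
  have hp0inj : Function.Injective p0 := by
    intro q1 q2 h
    by_contra hne
    by_cases hi : q1.1 = q2.1
    · have hb : q1.2 ≠ q2.2 := fun hb => hne (Prod.ext hi hb)
      obtain ⟨i1, b1⟩ := q1
      obtain ⟨i2, b2⟩ := q2
      simp only at hi; subst hi
      cases b1 <;> cases b2
      · exact hne rfl
      · exact hsr i1 (by simpa [p0] using h)
      · have h' : r i1 = s i1 := by simpa [p0] using h
        exact hsr i1 h'.symm
      · exact hne rfl
    · refine htrans q1.1 q2.1 hi (p0 q1) ⟨hfix q1, ?_⟩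
      rw [h] at *
      exact hfix q2
  have hpinj : Function.Injective (fun q => t • p0 q : Fin (N + 1) × Bool → L) :=
    (MulAction.injective t).comp hp0inj
  obtain ⟨O, hOopen, hOmem, hOdisj⟩ := exists_disjoint_opens _ hpinj
  -- conjugation computation
  have hconj : ∀ (a : Γ) (x : L), (t * a * t⁻¹) • x = t • a • t⁻¹ • x := by
    intro a x; rw [mul_smul, mul_smul]
  have hnhds : ∀ (q : Fin (N + 1) × Bool) (W : Set L), IsOpen W → t • p0 q ∈ W →
      (fun x : L => t • x) ⁻¹' W ∈ nhds (p0 q) := by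
    intro q W hWo hWm
    exact (hcont t).continuousAt.preimage_mem_nhds (hWo.mem_nhds hWm)
  -- contraction for g' 0 : maps Uᶜ into O (0, false)
  have h0 : ∃ m : ℕ, ∀ x : L, x ∉ U → ((g' 0) ^ m)⁻¹ • x ∈ O (0, false) := by
    have hSn : (fun x : L => t • x) ⁻¹' O (0, false) ∈ nhds (s 0) :=
      hnhds (0, false) _ (hOopen _) (hOmem (0, false))
    have hRn : (fun x : L => t • x) ⁻¹' U ∈ nhds (r 0) := by
      refine (hcont t).continuousAt.preimage_mem_nhds (hUopen.mem_nhds ?_)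
      exact hr'0U
    obtain ⟨n₀, hn₀⟩ := hdyn 0 _ hSn _ hRn
    refine ⟨n₀, fun x hx => ?_⟩
    have hmem : t⁻¹ • x ∈ ((fun x : L => t • x) ⁻¹' U)ᶜ := by
      simp only [Set.mem_compl_iff, Set.mem_preimage, smul_inv_smul]
      exact hx
    have := (hn₀ n₀ le_rfl).2 ⟨t⁻¹ • x, hmem, rfl⟩
    have heq : ((g' 0) ^ n₀)⁻¹ • x = t • (g 0 ^ n₀)⁻¹ • t⁻¹ • x := by
      rw [hg'def]
      simp only [conj_pow]
      rw [show (t * g 0 ^ n₀ * t⁻¹)⁻¹ = t * (g 0 ^ n₀)⁻¹ * t⁻¹ by group]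
      exact hconj _ _
    rw [heq]
    exact this
  obtain ⟨m, hm⟩ := h0
  -- contraction for g' (j.succ) : maps O (0, false) into O (j.succ, true)
  have hstep : ∀ j : Fin N, ∃ n : ℕ, ∀ x ∈ O (0, false),
      ((g' j.succ) ^ n) • x ∈ O (j.succ, true) := by
    intro j
    have hSn : (fun x : L => t • x) ⁻¹' O (j.succ, false) ∈ nhds (s j.succ) :=
      hnhds (j.succ, false) _ (hOopen _) (hOmem (j.succ, false))
    have hRn : (fun x : L => t • x) ⁻¹' O (j.succ, true) ∈ nhds (r j.succ) :=
      hnhds (j.succ, true) _ (hOopen _) (hOmem (j.succ, true))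
    obtain ⟨n₀, hn₀⟩ := hdyn j.succ _ hSn _ hRn
    refine ⟨n₀, fun x hx => ?_⟩
    have hne : ((0 : Fin (N + 1)), false) ≠ (j.succ, false) := by
      intro h
      exact (Fin.succ_ne_zero j) (congrArg Prod.fst h).symm
    have hxnot : x ∉ O (j.succ, false) :=
      fun hc => Set.disjoint_left.1 (hOdisj _ _ hne) hx hc
    have hmem : t⁻¹ • x ∈ ((fun x : L => t • x) ⁻¹' O (j.succ, false))ᶜ := by
      simp only [Set.mem_compl_iff, Set.mem_preimage, smul_inv_smul]
      exact hxnot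
    have := (hn₀ n₀ le_rfl).1 ⟨t⁻¹ • x, hmem, rfl⟩
    have heq : ((g' j.succ) ^ n₀) • x = t • (g j.succ ^ n₀) • t⁻¹ • x := by
      rw [hg'def]
      simp only [conj_pow]
      exact hconj _ _
    rw [heq]
    exact this
  choose n hn using hstep
  -- the final data
  set γ : Fin N → Γ := fun j => (g' j.succ) ^ (n j) * ((g' 0) ^ m)⁻¹ with hγdef
  have hγmap : ∀ (j : Fin N) (x : L), x ∉ U → γ j • x ∈ O (j.succ, true) := by
    intro j x hx
    rw [hγdef]
    simp only [mul_smul]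
    exact hn j _ (hm x hx)
  refine ⟨{a : Γ | a • y ∈ U}, {a : Γ | a • y ∈ U}ᶜ, γ, Set.union_compl_self _,
    disjoint_compl_right, ?_, ?_⟩
  · intro f hf
    rw [Set.disjoint_left]
    rintro a ⟨c, hc, rfl⟩ hac
    have hac' : (f * c) • y ∈ U := hac
    rw [mul_smul] at hac'
    exact hUF f hf (c • y) hc hac'
  · intro j k hjk
    rw [Set.disjoint_left]
    rintro a ⟨d₁, hd₁, rfl⟩ ⟨d₂, hd₂, he⟩
    have he' : γ k * d₂ = γ j * d₁ := he
    have h₁ : (γ j * d₁) • y ∈ O (j.succ, true) := by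
      rw [mul_smul]; exact hγmap j _ hd₁
    have h₂ : (γ j * d₁) • y ∈ O (k.succ, true) := by
      rw [← he', mul_smul]; exact hγmap k _ hd₂
    have hne : ((j.succ : Fin (N + 1)), true) ≠ (k.succ, true) := by
      intro h
      exact hjk (Fin.succ_injective _ (congrArg Prod.fst h))
    exact Set.disjoint_left.1 (hOdisj _ _ hne) h₁ h₂
end
end

section
/- Let Γ be a group acting by homeomorphisms on a Hausdorff topological space L, and let L_hyp denote the set of points of L which are fixed by some element of Γ acting as a hyperbolic homeomorphism of L. Assume that (i) Γ contains two elements acting as transverse hyperbolic homeomorphisms of L, and (ii) for every finite subset F of Γ ∖ {1} there exists a point t ∈ L_hyp such that f·t ≠ t for all f ∈ F. Then Γ is a Powers group. -/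
/-!
Take a point `t` of `L_hyp` moved by every element of `F` and an open `U ∋ t` with
`f • U ∩ U = ∅` for `f ∈ F`; then `C = {x | x • t ∈ U}` satisfies `f • C ∩ C = ∅`. Let `h` be
hyperbolic with range `t` and source `s`. Using the transverse pair one finds `c` with
`c • s, c • t ≠ s`, so for large `m` the element `w = h ^ m * c` moves both `s` and `t` into `U`,
and `a = w h w⁻¹` is hyperbolic with source and range in `U`. Hence `a ^ n • Uᶜ ⊆ U` for large `n`,
and the powers `γ_j = a ^ (j (n₀ + 1))` play ping-pong on `D = Cᶜ`.
-/

noncomputable section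

open scoped ENNReal

open Set Topology
open scoped Pointwise

section PingPong

variable {Γ X : Type*} [Group Γ] [MulAction Γ X]

lemma smul_compl_subset_iff {a : Γ} {S R : Set X} : a • Sᶜ ⊆ R ↔ a⁻¹ • Rᶜ ⊆ S := by
  rw [smul_set_subset_iff_subset_inv_smul_set, compl_subset_comm, smul_set_compl]

lemma smul_set_preimage_smul_right (f : Γ) (t : X) (U : Set X) :
    f • ((fun g : Γ => g • t) ⁻¹' U) = (fun g : Γ => g • t) ⁻¹' (f • U) := by
  ext x
  simp [mem_smul_set_iff_inv_smul_mem, mul_smul]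

lemma disjoint_pow_smul_compl {b : Γ} {C : Set X} (hb : ∀ m, 1 ≤ m → b ^ m • Cᶜ ⊆ C)
    {j k : ℕ} (hjk : j < k) : Disjoint (b ^ j • Cᶜ) (b ^ k • Cᶜ) := by
  have hk : b ^ k • Cᶜ = b ^ j • b ^ (k - j) • Cᶜ := by
    rw [smul_smul, ← pow_add, Nat.add_sub_cancel' hjk.le]
  rw [hk, disjoint_smul_set]
  exact disjoint_compl_left.mono_right (hb _ (Nat.sub_pos_of_lt hjk))

theorem isPowersGroup_of_forall_exists_pingPong [Nonempty X]
    (h : ∀ F : Finset Γ, (1 : Γ) ∉ F → ∃ (U : Set X) (a : Γ) (n₀ : ℕ),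
      (∀ f ∈ F, Disjoint (f • U) U) ∧ ∀ n ≥ n₀, a ^ n • Uᶜ ⊆ U) :
    IsPowersGroup Γ := by
  intro F hF N _
  obtain ⟨U, a, n₀, hFU, haU⟩ := h F hF
  obtain ⟨t⟩ := ‹Nonempty X›
  set C : Set Γ := (fun g : Γ => g • t) ⁻¹' U
  have hFC : ∀ f ∈ F, Disjoint (f • C) C := fun f hf => by
    rw [smul_set_preimage_smul_right]
    exact (hFU f hf).preimage _
  have hb : ∀ m, 1 ≤ m → (a ^ (n₀ + 1)) ^ m • Cᶜ ⊆ C := fun m hm => by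
    rw [← preimage_compl, smul_set_preimage_smul_right, ← pow_mul]
    exact preimage_mono (haU _ (by nlinarith))
  refine ⟨C, Cᶜ, fun j => (a ^ (n₀ + 1)) ^ (j : ℕ), union_compl_self C, disjoint_compl_right,
    hFC, fun j k hjk => ?_⟩
  rcases lt_or_gt_of_ne (Fin.val_ne_of_ne hjk) with hlt | hlt
  · exact disjoint_pow_smul_compl hb hlt
  · exact (disjoint_pow_smul_compl hb hlt).symm

end PingPong

section Dynamics

variable {Γ L : Type*} [Group Γ] [TopologicalSpace L] [MulAction Γ L] {g : Γ} {s r : L}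

variable (L) in
/-- `IsHyperbolicSMul` without the fixed points and without the second inclusion
`g⁻ⁿ(L ∖ R) ⊆ S`, which is equivalent to the first by `smul_compl_subset_iff`. -/
def IsHyperbolicWith (g : Γ) (s r : L) : Prop :=
  ∀ S ∈ 𝓝 s, ∀ R ∈ 𝓝 r, ∃ n₀ : ℕ, ∀ n ≥ n₀, g ^ n • Sᶜ ⊆ R

lemma IsHyperbolicSMul.exists_isHyperbolicWith (hg : IsHyperbolicSMul L g) :
    ∃ s r : L, g • s = s ∧ g • r = r ∧ IsHyperbolicWith L g s r := by
  obtain ⟨s, r, -, hs, hr, h⟩ := hg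
  exact ⟨s, r, hs, hr, fun S hS R hR => (h S hS R hR).imp fun _ h n hn => (h n hn).1⟩

lemma IsHyperbolicWith.inv (h : IsHyperbolicWith L g s r) : IsHyperbolicWith L g⁻¹ r s :=
  fun R hR S hS => (h S hS R hR).imp fun _ h n hn => by
    rw [inv_pow, smul_compl_subset_iff, inv_inv]
    exact h n hn

lemma IsHyperbolicWith.pow (h : IsHyperbolicWith L g s r) {k : ℕ} (hk : k ≠ 0) :
    IsHyperbolicWith L (g ^ k) s r :=
  fun S hS R hR => (h S hS R hR).imp fun _ h n hn => by
    rw [← pow_mul]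
    exact h _ (hn.trans (Nat.le_mul_of_pos_left n (Nat.pos_of_ne_zero hk)))

lemma IsHyperbolicWith.conj [ContinuousConstSMul Γ L] (h : IsHyperbolicWith L g s r) (w : Γ) :
    IsHyperbolicWith L (w * g * w⁻¹) (w • s) (w • r) := by
  intro S hS R hR
  rw [← smul_inv_smul w S, smul_mem_nhds_smul_iff] at hS
  rw [← smul_inv_smul w R, smul_mem_nhds_smul_iff] at hR
  refine (h _ hS _ hR).imp fun _ h n hn => ?_
  rw [conj_pow, mul_smul, mul_smul, smul_set_compl, smul_set_subset_iff_subset_inv_smul_set]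
  exact h n hn

lemma IsHyperbolicWith.exists_pow_smul_subset (h : IsHyperbolicWith L g s r) {K U : Set L}
    (hK : IsClosed K) (hsK : s ∉ K) (hU : U ∈ 𝓝 r) : ∃ n : ℕ, g ^ n • K ⊆ U := by
  obtain ⟨n₀, hn₀⟩ := h Kᶜ (hK.isOpen_compl.mem_nhds hsK) U hU
  exact ⟨n₀, by simpa using hn₀ n₀ le_rfl⟩

lemma IsHyperbolicWith.eq_or_eq_of_smul_eq [T1Space L] (h : IsHyperbolicWith L g s r) {x : L}
    (hx : g • x = x) : x = s ∨ x = r := by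
  by_contra! hxsr
  obtain ⟨n₀, hn₀⟩ := h {x}ᶜ (compl_singleton_mem_nhds hxsr.1.symm) {x}ᶜ
    (compl_singleton_mem_nhds hxsr.2.symm)
  have hfix : g ^ n₀ • x = x := smul_eq_self_of_mem_zpowers (Subgroup.npow_mem_zpowers g n₀) hx
  simpa [hfix] using hn₀ n₀ le_rfl

lemma IsHyperbolicSMul.exists_isHyperbolicWith_range [T1Space L] (hg : IsHyperbolicSMul L g)
    {t : L} (ht : g • t = t) : ∃ (h : Γ) (s : L), IsHyperbolicWith L h s t := by
  obtain ⟨s, r, -, -, hsr⟩ := hg.exists_isHyperbolicWith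
  rcases hsr.eq_or_eq_of_smul_eq ht with rfl | rfl
  · exact ⟨g⁻¹, r, hsr.inv⟩
  · exact ⟨g, s, hsr⟩

lemma IsHyperbolicSMul.pow_smul_ne [T1Space L] (hg : IsHyperbolicSMul L g) {k : ℕ} (hk : k ≠ 0)
    {x : L} (hx : g • x ≠ x) : g ^ k • x ≠ x := by
  obtain ⟨p, q, hp, hq, hpq⟩ := hg.exists_isHyperbolicWith
  intro hfix
  rcases (hpq.pow hk).eq_or_eq_of_smul_eq hfix with rfl | rfl <;> contradiction

lemma exists_smul_ne_and_smul_ne [T1Space L] {g₁ g₂ : Γ} (hg₁ : IsHyperbolicSMul L g₁)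
    (hg₂ : IsHyperbolicSMul L g₂) (htrans : ∀ x : L, ¬(g₁ • x = x ∧ g₂ • x = x)) (s t : L) :
    ∃ c : Γ, c • s ≠ s ∧ c • t ≠ s := by
  obtain ⟨g, hg, hgs⟩ : ∃ g : Γ, IsHyperbolicSMul L g ∧ g • s ≠ s := by
    by_cases h₁ : g₁ • s = s
    · exact ⟨g₂, hg₂, fun h₂ => htrans s ⟨h₁, h₂⟩⟩
    · exact ⟨g₁, hg₁, h₁⟩
  -- if `g • t = s`, then `g ^ 2` works: `g ^ 2` has the same fixed points as `g`
  by_cases hgt : g • t = s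
  · refine ⟨g ^ 2, hg.pow_smul_ne two_ne_zero hgs, ?_⟩
    rwa [pow_two, mul_smul, hgt]
  · exact ⟨g, hgs, hgt⟩

lemma exists_pow_smul_compl_subset [T1Space L] [ContinuousConstSMul Γ L] {g₁ g₂ : Γ}
    (hg₁ : IsHyperbolicSMul L g₁) (hg₂ : IsHyperbolicSMul L g₂)
    (htrans : ∀ x : L, ¬(g₁ • x = x ∧ g₂ • x = x)) {h : Γ} {t : L}
    (hh : IsHyperbolicWith L h s t) {U : Set L} (hU : IsOpen U) (htU : t ∈ U) :
    ∃ (a : Γ) (n₀ : ℕ), ∀ n ≥ n₀, a ^ n • Uᶜ ⊆ U := by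
  obtain ⟨c, hcs, hct⟩ := exists_smul_ne_and_smul_ne hg₁ hg₂ htrans s t
  obtain ⟨m, hm⟩ := hh.exists_pow_smul_subset (K := {c • s, c • t}) (toFinite _).isClosed
    (by simp [hcs.symm, hct.symm]) (hU.mem_nhds htU)
  have hw : ∀ x ∈ ({s, t} : Set L), (h ^ m * c) • x ∈ U := fun x hx => by
    rw [mul_smul]
    exact hm (smul_mem_smul_set (by rcases hx with rfl | rfl <;> simp))
  obtain ⟨n₀, hn₀⟩ := hh.conj (h ^ m * c) U (hU.mem_nhds (hw s (by simp))) U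
    (hU.mem_nhds (hw t (by simp)))
  exact ⟨_, n₀, hn₀⟩

lemma exists_isOpen_mem_disjoint_smul_self [T2Space L] [ContinuousConstSMul Γ L] {f : Γ} {t : L}
    (hf : f • t ≠ t) : ∃ V : Set L, IsOpen V ∧ t ∈ V ∧ Disjoint (f • V) V := by
  obtain ⟨A, B, hA, hB, hfA, htB, hAB⟩ := t2_separation hf
  refine ⟨f⁻¹ • A ∩ B, (hA.smul _).inter hB, ⟨mem_inv_smul_set_iff.2 hfA, htB⟩, ?_⟩
  rw [smul_set_inter, smul_inv_smul]
  exact hAB.mono inter_subset_left inter_subset_right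

lemma exists_isOpen_mem_forall_disjoint_smul [T2Space L] [ContinuousConstSMul Γ L]
    (F : Finset Γ) {t : L} (hF : ∀ f ∈ F, f • t ≠ t) :
    ∃ U : Set L, IsOpen U ∧ t ∈ U ∧ ∀ f ∈ F, Disjoint (f • U) U := by
  choose! V hVo htV hVd using fun f (hf : f ∈ F) => exists_isOpen_mem_disjoint_smul_self (hF f hf)
  refine ⟨⋂ f ∈ F, V f, isOpen_biInter_finset hVo, mem_iInter₂.2 htV, fun f hf => ?_⟩
  have hsub : (⋂ f ∈ F, V f) ⊆ V f := biInter_subset_of_mem (s := (F : Set Γ)) hf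
  exact (hVd f hf).mono (smul_set_mono hsub) hsub

end Dynamics

/-- If a group `Γ` acts by homeomorphisms on a Hausdorff space `L`, contains two transverse
hyperbolic elements, and for every finite subset `F` of `Γ ∖ {1}` there is a point of
`L_hyp` moved by every element of `F`, then `Γ` is a Powers group. -/
theorem isPowersGroup_of_transverse_hyperbolic_pair
    {Γ L : Type*} [Group Γ] [TopologicalSpace L] [T2Space L] [MulAction Γ L]
    (hcont : ∀ g : Γ, Continuous fun x : L => g • x)
    (hpair : ∃ g₁ g₂ : Γ, IsHyperbolicSMul L g₁ ∧ IsHyperbolicSMul L g₂ ∧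
      ∀ x : L, ¬(g₁ • x = x ∧ g₂ • x = x))
    (hfaith : ∀ F : Finset Γ, (1 : Γ) ∉ F →
      ∃ t : L, (∃ h : Γ, IsHyperbolicSMul L h ∧ h • t = t) ∧ ∀ f ∈ F, f • t ≠ t) :
    IsPowersGroup Γ := by
  have : ContinuousConstSMul Γ L := ⟨hcont⟩
  have : Nonempty L := (hfaith ∅ (Finset.notMem_empty 1)).nonempty
  obtain ⟨g₁, g₂, hg₁, hg₂, htrans⟩ := hpair
  refine isPowersGroup_of_forall_exists_pingPong (X := L) fun F hF => ?_
  obtain ⟨t, ⟨h, hh, hht⟩, hFt⟩ := hfaith F hF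
  obtain ⟨U, hUo, htU, hFU⟩ := exists_isOpen_mem_forall_disjoint_smul F hFt
  obtain ⟨h', s, hh'⟩ := hh.exists_isHyperbolicWith_range hht
  obtain ⟨a, n₀, ha⟩ := exists_pow_smul_compl_subset hg₁ hg₂ htrans hh' hUo htU
  exact ⟨U, a, n₀, hFU, ha⟩
end
end

section
/- Let h₁ and h₂ be transverse hyperbolic homeomorphisms of a Hausdorff topological space L. Then there exists a strictly increasing sequence (j_k)_{k≥1} of positive integers such that the homeomorphisms h₁^{j_k} h₂ h₁^{−j_k}, k ≥ 1, are hyperbolic and pairwise transverse. In particular, for every integer N ≥ 1 the group of homeomorphisms generated by h₁ and h₂ contains N pairwise transverse hyperbolic elements. -/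
noncomputable section

open scoped ENNReal

/-- The group of self-homeomorphisms of a topological space, with `f * g = f ∘ g`. -/
instance homeomorphGroup (L : Type*) [TopologicalSpace L] : Group (L ≃ₜ L) where
  mul f g := g.trans f
  one := Homeomorph.refl L
  inv := Homeomorph.symm
  mul_assoc f g h := Homeomorph.ext fun _ => rfl
  one_mul f := Homeomorph.ext fun _ => rfl
  mul_one f := Homeomorph.ext fun _ => rfl
  inv_mul_cancel f := Homeomorph.ext fun x => f.symm_apply_apply x

/-- A homeomorphism `e` of a topological space `L` is hyperbolic if it has two fixed
points `s ≠ r` (the source and the range) such that for all neighbourhoods `S` of `s`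
and `R` of `r` there is `n₀` with `eⁿ(L ∖ S) ⊆ R` and `e⁻ⁿ(L ∖ R) ⊆ S` for `n ≥ n₀`. -/
def IsHyperbolicHomeo {L : Type*} [TopologicalSpace L] (e : L ≃ₜ L) : Prop :=
  ∃ s r : L, s ≠ r ∧ e s = s ∧ e r = r ∧
    ∀ S ∈ nhds s, ∀ R ∈ nhds r, ∃ n₀ : ℕ, ∀ n ≥ n₀,
      (⇑(e ^ n)) '' Sᶜ ⊆ R ∧ (⇑((e ^ n)⁻¹)) '' Rᶜ ⊆ S

section Aux

variable {L : Type*} [TopologicalSpace L] [T2Space L]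

private lemma mul_apply' (f g : L ≃ₜ L) (x : L) : (f * g) x = f (g x) := rfl

private lemma pow_apply_fixed (f : L ≃ₜ L) {x : L} (hx : f x = x) :
    ∀ n : ℕ, (f ^ n) x = x := by
  intro n
  induction n with
  | zero => rfl
  | succ n ih => rw [pow_succ, mul_apply', hx, ih]

private lemma periodic_fixed (e : L ≃ₜ L) {s r : L}
    (hcon : ∀ S ∈ nhds s, ∀ R ∈ nhds r, ∃ n₀ : ℕ, ∀ n ≥ n₀,
      (⇑(e ^ n)) '' Sᶜ ⊆ R ∧ (⇑((e ^ n)⁻¹)) '' Rᶜ ⊆ S)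
    {m : ℕ} (hm : 1 ≤ m) {x : L} (hx : (e ^ m) x = x)
    (hxs : x ≠ s) (hxr : x ≠ r) : False := by
  have hS : ({x}ᶜ : Set L) ∈ nhds s := compl_singleton_mem_nhds hxs.symm
  have hR : ({x}ᶜ : Set L) ∈ nhds r := compl_singleton_mem_nhds hxr.symm
  obtain ⟨n₀, hn⟩ := hcon _ hS _ hR
  have hge : n₀ ≤ m * (n₀ + 1) := le_trans (Nat.le_succ n₀) (Nat.le_mul_of_pos_left _ hm)
  have hx' : (e ^ (m * (n₀ + 1))) x = x := by
    rw [pow_mul]; exact pow_apply_fixed _ hx _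
  have hxm : x ∈ (({x}ᶜ : Set L))ᶜ := by simp
  have : x ∈ ({x}ᶜ : Set L) := (hn _ hge).1 ⟨x, hxm, hx'⟩
  simp at this

private lemma fixed_eq (e : L ≃ₜ L) {s r : L}
    (hcon : ∀ S ∈ nhds s, ∀ R ∈ nhds r, ∃ n₀ : ℕ, ∀ n ≥ n₀,
      (⇑(e ^ n)) '' Sᶜ ⊆ R ∧ (⇑((e ^ n)⁻¹)) '' Rᶜ ⊆ S)
    {x : L} (hx : e x = x) : x = s ∨ x = r := by
  by_contra h
  push_neg at h
  exact periodic_fixed e hcon le_rfl (by rw [pow_one]; exact hx) h.1 h.2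

private lemma conj_image_subset (h f : L ≃ₜ L) {A B : Set L}
    (hf : ⇑f '' (⇑h ⁻¹' A)ᶜ ⊆ ⇑h ⁻¹' B) : ⇑(h * f * h⁻¹) '' Aᶜ ⊆ B := by
  rintro y ⟨z, hz, rfl⟩
  have hz' : h.symm z ∈ (⇑h ⁻¹' A)ᶜ := by
    simp only [Set.mem_compl_iff, Set.mem_preimage, h.apply_symm_apply]
    exact hz
  have := hf ⟨h.symm z, hz', rfl⟩
  simpa using this

private lemma conj_hyperbolic (h e : L ≃ₜ L) (he : IsHyperbolicHomeo e) :
    IsHyperbolicHomeo (h * e * h⁻¹) := by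
  obtain ⟨s, r, hne, hs, hr, hcon⟩ := he
  refine ⟨h s, h r, fun hc => hne (h.injective hc), ?_, ?_, ?_⟩
  · show h (e (h.symm (h s))) = h s
    rw [h.symm_apply_apply, hs]
  · show h (e (h.symm (h r))) = h r
    rw [h.symm_apply_apply, hr]
  · intro S hS R hR
    have hS' : ⇑h ⁻¹' S ∈ nhds s := h.continuous.continuousAt.preimage_mem_nhds (hs ▸ hS)
    have hR' : ⇑h ⁻¹' R ∈ nhds r := h.continuous.continuousAt.preimage_mem_nhds (hr ▸ hR)
    obtain ⟨n₀, hn⟩ := hcon _ hS' _ hR'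
    refine ⟨n₀, fun n hge => ?_⟩
    have hpow : (h * e * h⁻¹) ^ n = h * e ^ n * h⁻¹ := conj_pow
    have hpowinv : ((h * e * h⁻¹) ^ n)⁻¹ = h * (e ^ n)⁻¹ * h⁻¹ := by
      rw [hpow, mul_inv_rev, mul_inv_rev, inv_inv, mul_assoc]
    constructor
    · rw [hpow]; exact conj_image_subset h _ (hn n hge).1
    · rw [hpowinv]; exact conj_image_subset h _ (hn n hge).2

end Aux

/-- If `h₁, h₂` are transverse hyperbolic homeomorphisms of a Hausdorff space `L`, then
there is a strictly increasing sequence `(j_k)` of positive integers such that the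
conjugates `h₁^{j_k} h₂ h₁^{-j_k}` are hyperbolic and pairwise transverse; in particular,
for every `N ≥ 1` the group generated by `h₁` and `h₂` contains `N` pairwise transverse
hyperbolic elements. -/
theorem exists_pairwise_transverse_conjugates
    {L : Type*} [TopologicalSpace L] [T2Space L] (h₁ h₂ : L ≃ₜ L)
    (hyp₁ : IsHyperbolicHomeo h₁) (hyp₂ : IsHyperbolicHomeo h₂)
    (htrans : ∀ x : L, ¬(h₁ x = x ∧ h₂ x = x)) :
    ∃ j : ℕ → ℕ, StrictMono j ∧ (∀ k, 0 < j k) ∧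
      (∀ k, IsHyperbolicHomeo (h₁ ^ j k * h₂ * (h₁ ^ j k)⁻¹)) ∧
      (∀ k l : ℕ, k ≠ l → ∀ x : L,
        ¬((h₁ ^ j k * h₂ * (h₁ ^ j k)⁻¹) x = x ∧ (h₁ ^ j l * h₂ * (h₁ ^ j l)⁻¹) x = x)) ∧
      ∀ N : ℕ, 1 ≤ N → ∃ g : Fin N → L ≃ₜ L,
        (∀ i, g i ∈ Subgroup.closure {h₁, h₂}) ∧ (∀ i, IsHyperbolicHomeo (g i)) ∧
        ∀ i i' : Fin N, i ≠ i' → ∀ x : L, ¬(g i x = x ∧ g i' x = x) := by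
  obtain ⟨s₁, r₁, hne₁, hs₁, hr₁, hcon₁⟩ := hyp₁
  obtain ⟨s₂, r₂, hne₂, hs₂, hr₂, hcon₂⟩ := hyp₂
  -- s₂ and r₂ are not fixed by h₁, hence differ from s₁ and r₁
  have hns : h₁ s₂ ≠ s₂ := fun h => htrans s₂ ⟨h, hs₂⟩
  have hnr : h₁ r₂ ≠ r₂ := fun h => htrans r₂ ⟨h, hr₂⟩
  have hs₂s₁ : s₂ ≠ s₁ := fun h => hns (by rw [h, hs₁])
  have hs₂r₁ : s₂ ≠ r₁ := fun h => hns (by rw [h, hr₁])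
  have hr₂s₁ : r₂ ≠ s₁ := fun h => hnr (by rw [h, hs₁])
  have hr₂r₁ : r₂ ≠ r₁ := fun h => hnr (by rw [h, hr₁])
  -- no positive power of h₁ fixes s₂ or r₂
  have hpers : ∀ m : ℕ, 1 ≤ m → (h₁ ^ m) s₂ ≠ s₂ := fun m hm h =>
    periodic_fixed h₁ hcon₁ hm h hs₂s₁ hs₂r₁
  have hperr : ∀ m : ℕ, 1 ≤ m → (h₁ ^ m) r₂ ≠ r₂ := fun m hm h =>
    periodic_fixed h₁ hcon₁ hm h hr₂s₁ hr₂r₁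
  -- eventually h₁^m s₂ ≠ r₂
  have hM₁ : ∃ M₁ : ℕ, ∀ m, M₁ ≤ m → (h₁ ^ m) s₂ ≠ r₂ := by
    by_cases hex : ∃ m, (h₁ ^ m) s₂ = r₂
    · obtain ⟨m₀, hm₀⟩ := hex
      refine ⟨m₀ + 1, fun m hm heq => ?_⟩
      have hd : m = m₀ + (m - m₀) := by omega
      have : (h₁ ^ m₀) ((h₁ ^ (m - m₀)) s₂) = (h₁ ^ m₀) s₂ := by
        rw [← mul_apply', ← pow_add, ← hd, heq, hm₀]
      exact hpers (m - m₀) (by omega) ((h₁ ^ m₀).injective this)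
    · exact ⟨0, fun m _ heq => hex ⟨m, heq⟩⟩
  have hM₂ : ∃ M₂ : ℕ, ∀ m, M₂ ≤ m → (h₁ ^ m) r₂ ≠ s₂ := by
    by_cases hex : ∃ m, (h₁ ^ m) r₂ = s₂
    · obtain ⟨m₀, hm₀⟩ := hex
      refine ⟨m₀ + 1, fun m hm heq => ?_⟩
      have hd : m = m₀ + (m - m₀) := by omega
      have : (h₁ ^ m₀) ((h₁ ^ (m - m₀)) r₂) = (h₁ ^ m₀) r₂ := by
        rw [← mul_apply', ← pow_add, ← hd, heq, hm₀]
      exact hperr (m - m₀) (by omega) ((h₁ ^ m₀).injective this)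
    · exact ⟨0, fun m _ heq => hex ⟨m, heq⟩⟩
  obtain ⟨M₁, hM₁⟩ := hM₁
  obtain ⟨M₂, hM₂⟩ := hM₂
  set M : ℕ := max (max M₁ M₂) 1 with hMdef
  have hMpos : 1 ≤ M := le_max_right _ _
  have key : ∀ k l : ℕ, l < k → ∀ x : L,
      ¬((h₁ ^ ((k + 1) * M) * h₂ * (h₁ ^ ((k + 1) * M))⁻¹) x = x ∧
        (h₁ ^ ((l + 1) * M) * h₂ * (h₁ ^ ((l + 1) * M))⁻¹) x = x) := by
    intro k l hlt x ⟨hxk, hxl⟩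
    set P := h₁ ^ ((k + 1) * M) with hP
    set Q := h₁ ^ ((l + 1) * M) with hQ
    set y := P⁻¹ x with hy
    set y' := Q⁻¹ x with hy'
    have hPy : P y = x := P.apply_symm_apply x
    have hQy : Q y' = x := Q.apply_symm_apply x
    have hfy : h₂ y = y := by
      have : P (h₂ y) = P y := by
        rw [hPy]; exact hxk
      exact P.injective this
    have hfy' : h₂ y' = y' := by
      have : Q (h₂ y') = Q y' := by
        rw [hQy]; exact hxl
      exact Q.injective this
    have hyc : y = s₂ ∨ y = r₂ := fixed_eq h₂ hcon₂ hfy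
    have hyc' : y' = s₂ ∨ y' = r₂ := fixed_eq h₂ hcon₂ hfy'
    -- the translation step
    set d : ℕ := (k + 1) * M - (l + 1) * M with hddef
    have hdeq : (k + 1) * M = (l + 1) * M + d := by
      have : (l + 1) * M ≤ (k + 1) * M :=
        Nat.mul_le_mul_right _ (by omega)
      omega
    have hdM : M ≤ d := by
      have : d = (k - l) * M := by
        rw [hddef, ← Nat.sub_mul]
        congr 1
        omega
      rw [this]
      exact Nat.le_mul_of_pos_left _ (by omega)
    have hd1 : 1 ≤ d := le_trans hMpos hdM
    have hdM₁ : M₁ ≤ d := le_trans (le_trans (le_max_left _ _) (le_max_left _ _)) hdM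
    have hdM₂ : M₂ ≤ d := le_trans (le_trans (le_max_right _ _) (le_max_left _ _)) hdM
    have hshift : (h₁ ^ d) y = y' := by
      have : Q ((h₁ ^ d) y) = Q y' := by
        rw [hQy, ← hPy, hP, hQ, hdeq, pow_add, mul_apply']
      exact Q.injective this
    rcases hyc with hy2 | hy2 <;> rcases hyc' with hy2' | hy2'
    · exact hpers d hd1 (by rw [hy2, hy2'] at hshift; exact hshift)
    · exact hM₁ d hdM₁ (by rw [hy2, hy2'] at hshift; exact hshift)
    · exact hM₂ d hdM₂ (by rw [hy2, hy2'] at hshift; exact hshift)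
    · exact hperr d hd1 (by rw [hy2, hy2'] at hshift; exact hshift)
  refine ⟨fun k => (k + 1) * M, ?_, ?_, ?_, ?_, ?_⟩
  · intro a b hab
    exact Nat.mul_lt_mul_of_lt_of_le (by omega) le_rfl hMpos
  · intro k
    exact Nat.mul_pos (by omega) hMpos
  · intro k
    exact conj_hyperbolic _ _ ⟨s₂, r₂, hne₂, hs₂, hr₂, hcon₂⟩
  · -- pairwise transversality
    intro k l hkl x hx
    rcases Nat.lt_or_ge l k with h | h
    · exact key k l h x hx
    · exact key l k (by omega) x ⟨hx.2, hx.1⟩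
  · -- the N transverse elements
    intro N _
    have h₁mem : h₁ ∈ Subgroup.closure ({h₁, h₂} : Set (L ≃ₜ L)) :=
      Subgroup.subset_closure (by simp)
    have h₂mem : h₂ ∈ Subgroup.closure ({h₁, h₂} : Set (L ≃ₜ L)) :=
      Subgroup.subset_closure (by simp)
    refine ⟨fun i => h₁ ^ (((i : ℕ) + 1) * M) * h₂ * (h₁ ^ (((i : ℕ) + 1) * M))⁻¹,
      fun i => ?_, fun i => ?_, fun i i' hii x hx => ?_⟩
    · exact mul_mem (mul_mem (pow_mem h₁mem _) h₂mem) (inv_mem (pow_mem h₁mem _))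
    · exact conj_hyperbolic _ _ ⟨s₂, r₂, hne₂, hs₂, hr₂, hcon₂⟩
    · have hne : ((i : ℕ)) ≠ ((i' : ℕ)) := fun h => hii (Fin.val_injective h)
      rcases Nat.lt_or_ge (i' : ℕ) (i : ℕ) with h | h
      · exact key _ _ h x hx
      · exact key _ _ (by omega) x ⟨hx.2, hx.1⟩
end
end

section
/- Let Γ₁ and Γ₂ be groups with (|Γ₁| − 1)(|Γ₂| − 1) ≥ 2, i.e. both groups are nontrivial and at least one of them has at least three elements. Then the free product Γ₁ ∗ Γ₂ is a Powers group. -/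
/-!
Realise `Γ₁ ∗ Γ₂` as a free product `CoprodI` and argue with reduced words. Pick `x ≠ 1` in one
factor `A` and `y, y'` in the other factor `B` with `y, y', y'y ≠ 1`; then every positive power of
`d = y x y'` is a reduced word beginning and ending in `B`.

If `f ≠ 1` does not end in `B`, then `d⁻ᵐ f dᵐ` ends in `B` for every `m ≥ 1`: the word `f dᵐ` is
reduced and longer than `d⁻ᵐ`, so left multiplication by `d⁻ᵐ` cannot reach its last letter. By
pigeonhole, for some `k` every element of `dᵏ⁻¹ (F ∪ F⁻¹) dᵏ` ends in `B`, i.e. every element of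
`dᵏ⁻¹ F dᵏ` begins and ends in `B`. These map the words beginning in `A` off themselves, while the
quotients of distinct powers of `x d x⁻¹` are words beginning and ending in `A`, which translate
the complement into the words beginning in `A`: this ping-pong is the Powers partition.
-/

noncomputable section

open scoped ENNReal

theorem List.IsSuffix.tail {α : Type*} {l₁ l₂ : List α} (h : l₁ <:+ l₂) :
    l₁.tail <:+ l₂.tail := by
  obtain ⟨t, rfl⟩ := h
  cases t with
  | nil => exact List.suffix_refl _
  | cons a t => exact (List.tail_suffix l₁).trans (List.suffix_append t l₁)

theorem List.IsSuffix.getLast?_eq {α : Type*} {l₁ l₂ : List α} (h : l₁ <:+ l₂)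
    (hne : l₁ ≠ []) : l₂.getLast? = l₁.getLast? := by
  obtain ⟨t, rfl⟩ := h
  simp [List.getLast?_append, List.getLast?_eq_some_getLast hne]

theorem exists_ne_one_mul_ne_one {G : Type*} [Group G]
    (h : ∃ a b c : G, a ≠ b ∧ a ≠ c ∧ b ≠ c) : ∃ y y' : G, y ≠ 1 ∧ y' ≠ 1 ∧ y' * y ≠ 1 := by
  obtain ⟨a, b, c, hab, hac, hbc⟩ := h
  have := nontrivial_of_ne a b hab
  obtain ⟨y, hy⟩ := exists_ne (1 : G)
  by_contra! H
  have hcases (z : G) : z = 1 ∨ z = y⁻¹ :=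
    or_iff_not_imp_left.2 fun hz => eq_inv_of_mul_eq_one_left (H y z hy hz)
  rcases hcases a with rfl | rfl <;> rcases hcases b with rfl | rfl <;>
    rcases hcases c with rfl | rfl <;> contradiction

section PowersPartition

variable {G H : Type*} [Group G] [Group H]

def HasPowersPartition (F : Set G) (N : ℕ) : Prop :=
  ∃ (C D : Set G) (γ : Fin N → G),
    C ∪ D = Set.univ ∧ Disjoint C D ∧
    (∀ f ∈ F, Disjoint ((f * ·) '' C) C) ∧
    ∀ j k : Fin N, j ≠ k → Disjoint ((γ j * ·) '' D) ((γ k * ·) '' D)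

theorem HasPowersPartition.of_image_mulEquiv (e : G ≃* H) {F : Set G} {N : ℕ}
    (h : HasPowersPartition (e '' F) N) : HasPowersPartition F N := by
  obtain ⟨C, D, γ, hCD, hdisj, hC, hD⟩ := h
  have hmul (g : G) (S : Set H) : (g * ·) '' (e ⁻¹' S) = e ⁻¹' ((e g * ·) '' S) := by
    simp only [Set.image_mul_left, ← map_inv, ← Set.preimage_comp]
    congr 1; ext; simp
  refine ⟨e ⁻¹' C, e ⁻¹' D, fun k => e.symm (γ k), ?_, hdisj.preimage e, ?_, ?_⟩
  · rw [← Set.preimage_union, hCD, Set.preimage_univ]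
  · intro f hf
    rw [hmul]
    exact (hC (e f) (Set.mem_image_of_mem e hf)).preimage e
  · intro j k hjk
    rw [hmul, hmul, e.apply_symm_apply, e.apply_symm_apply]
    exact (hD j k hjk).preimage e

theorem IsPowersGroup.of_mulEquiv (e : G ≃* H) (h : IsPowersGroup G) : IsPowersGroup H := by
  classical
  intro F hF N hN
  refine HasPowersPartition.of_image_mulEquiv e.symm ?_
  have hF' : (1 : G) ∉ F.image e.symm := by simpa using hF
  have : HasPowersPartition (↑(F.image e.symm) : Set G) N := h _ hF' N hN
  rwa [Finset.coe_image] at this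

end PowersPartition

namespace Monoid.CoprodI

variable {ι : Type*} {M : ι → Type*}

section Monoid

variable [∀ i, Monoid (M i)]

def startsIn (i : ι) : Set (CoprodI M) := {g | ∃ (j : ι) (w : NeWord M i j), w.prod = g}

def endsIn (j : ι) : Set (CoprodI M) := {g | ∃ (i : ι) (w : NeWord M i j), w.prod = g}

namespace Word

variable [∀ i, DecidableEq (M i)]

theorem tail_toList_rcons_suffix {i : ι} (p : Pair M i) :
    (rcons p).toList.tail <:+ p.tail.toList := by
  unfold rcons
  split_ifs
  · exact List.tail_suffix _
  · exact List.suffix_refl _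

theorem toList_pair_tail_suffix_rcons {i : ι} (p : Pair M i) :
    p.tail.toList <:+ (rcons p).toList := by
  unfold rcons
  split_ifs
  · exact List.suffix_refl _
  · exact List.suffix_cons _ _

variable [DecidableEq ι]

theorem tail_toList_suffix_of_smul {i : ι} (m : M i) (w : Word M) :
    w.toList.tail <:+ (of m • w).toList := by
  have hw : rcons (equivPair i w) = w := (equivPair i).symm_apply_apply w
  calc w.toList.tail <:+ (equivPair i w).tail.toList := by
        simpa only [hw] using tail_toList_rcons_suffix (equivPair i w)
    -- `of m • w` unfolds to `rcons` of this pair (`of_smul_def`)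
    _ <:+ (of m • w).toList :=
        toList_pair_tail_suffix_rcons ⟨m * (equivPair i w).head, _, (equivPair i w).fstIdx_ne⟩

theorem drop_suffix_list_prod_smul (l : List (Σ i, M i)) (w : Word M) :
    w.toList.drop l.length <:+ ((l.map fun p => of p.2).prod • w).toList := by
  induction l with
  | nil => simp
  | cons p l ih =>
    rw [List.length_cons, ← List.tail_drop, List.map_cons, List.prod_cons, mul_smul]
    exact ih.tail.trans (tail_toList_suffix_of_smul _ _)

theorem getLast?_prod_smul {v w : Word M} (h : v.toList.length < w.toList.length) :
    (v.prod • w).toList.getLast? = w.toList.getLast? := by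
  have hne : w.toList.drop v.toList.length ≠ [] := by simpa using h
  have hsuffix : w.toList.drop v.toList.length <:+ (v.prod • w).toList :=
    drop_suffix_list_prod_smul v.toList w
  rw [hsuffix.getLast?_eq hne, (List.drop_suffix _ _).getLast?_eq hne]

end Word

namespace NeWord

theorem eq_of_prod_eq {i j k l : ι} {v : NeWord M i j} {w : NeWord M k l}
    (h : v.prod = w.prod) : i = k ∧ j = l := by
  have hl : v.toList = w.toList := by
    classical
    exact congrArg Word.toList (Word.equiv.symm.injective h)
  have hhead := congrArg List.head? hl
  have hlast := congrArg List.getLast? hl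
  simp only [toList_head?, toList_getLast?, Option.some.injEq] at hhead hlast
  exact ⟨congrArg Sigma.fst hhead, congrArg Sigma.fst hlast⟩

theorem prod_mul_mem_endsIn_of_length_lt {i j k l : ι} (v : NeWord M i j) (w : NeWord M k l)
    (h : v.toList.length < w.toList.length) : v.prod * w.prod ∈ endsIn l := by
  classical
  have hequiv : Word.equiv (v.prod * w.prod) = v.toWord.prod • w.toWord := by
    have hw : w.prod • Word.empty = w.toWord := Word.equiv.apply_symm_apply w.toWord
    change (v.prod * w.prod) • (Word.empty : Word M) = _
    rw [mul_smul, hw]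
    rfl
  have hlast : (Word.equiv (v.prod * w.prod)).toList.getLast? = some ⟨l, w.last⟩ := by
    rw [hequiv, Word.getLast?_prod_smul h]
    exact w.toList_getLast?
  obtain ⟨a, b, u, hu⟩ := of_word (Word.equiv (v.prod * w.prod)) (fun h => by simp [h] at hlast)
  rw [← hu, toWord, toList_getLast?, Option.some.injEq] at hlast
  obtain rfl : b = l := congrArg Sigma.fst hlast
  exact ⟨a, u, by rw [prod, hu]; exact Word.equiv.symm_apply_apply _⟩

theorem exists_prod_eq_of_ne_one {g : CoprodI M} (hg : g ≠ 1) :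
    ∃ (i j : ι) (w : NeWord M i j), w.prod = g := by
  classical
  obtain ⟨i, j, w, hw⟩ := of_word (Word.equiv g) fun h => hg (by
    rw [← Word.equiv.symm_apply_apply g, h]; rfl)
  exact ⟨i, j, w, by rw [prod, hw]; exact Word.equiv.symm_apply_apply g⟩

theorem prod_mul_mem_startsIn {i j : ι} (w : NeWord M i j) {u : CoprodI M}
    (hu : u ∉ startsIn j) : w.prod * u ∈ startsIn i := by
  rcases eq_or_ne u 1 with rfl | hu1
  · exact ⟨j, w, (mul_one _).symm⟩
  obtain ⟨a, b, v, rfl⟩ := exists_prod_eq_of_ne_one hu1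
  have hja : j ≠ a := by
    rintro rfl
    exact hu ⟨b, v, rfl⟩
  exact ⟨b, w.append hja v, append_prod⟩

end NeWord

theorem disjoint_startsIn {i j : ι} (hij : i ≠ j) :
    Disjoint (startsIn (M := M) i) (startsIn j) :=
  Set.disjoint_left.2 fun _ ⟨_, _, hv⟩ ⟨_, _, hw⟩ => hij (NeWord.eq_of_prod_eq (hv.trans hw.symm)).1

theorem exists_neWord_prod_eq_pow {i j : ι} (hij : i ≠ j) {x : M i} (hx : x ≠ 1) {y y' : M j}
    (hy : y ≠ 1) (hy' : y' ≠ 1) (hyy' : y' * y ≠ 1) (n : ℕ) :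
    ∃ w : NeWord M j j, w.head = y ∧ w.prod = (of y * of x * of y') ^ (n + 1) := by
  induction n with
  | zero =>
    exact ⟨.append (.singleton y hy) hij.symm (.append (.singleton x hx) hij (.singleton y' hy')),
      rfl, by simp [mul_assoc]⟩
  | succ n ih =>
    obtain ⟨w, hhead, hw⟩ := ih
    refine ⟨.append (.singleton y hy) hij.symm
      (.append (.singleton x hx) hij (w.mulHead y' (by rwa [hhead]))), rfl, ?_⟩
    simp [NeWord.mulHead_prod, hw, pow_succ' _ (n + 1), mul_assoc]

end Monoid

section Group

variable [∀ i, Group (M i)]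

theorem NeWord.length_toList_inv {i j : ι} (w : NeWord M i j) :
    w.inv.toList.length = w.toList.length := by
  induction w with
  | singleton => rfl
  | append w₁ _ w₂ ih₁ ih₂ => simp [NeWord.inv, ih₁, ih₂, add_comm]

theorem inv_mul_mul_mem_endsIn {j : ι} {f : CoprodI M} (hf : f ∉ endsIn j) (hf1 : f ≠ 1)
    (w : NeWord M j j) : w.prod⁻¹ * f * w.prod ∈ endsIn j := by
  obtain ⟨a, b, v, rfl⟩ := NeWord.exists_prod_eq_of_ne_one hf1
  have hbj : b ≠ j := by
    rintro rfl
    exact hf ⟨a, v, rfl⟩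
  rw [← NeWord.inv_prod, mul_assoc, ← NeWord.append_prod (w₁ := v) (hne := hbj) (w₂ := w)]
  apply NeWord.prod_mul_mem_endsIn_of_length_lt
  simpa [NeWord.length_toList_inv] using List.length_pos_iff.2 v.toList_ne_nil

theorem exists_conj_pow_mem_endsIn {j : ι} {d : CoprodI M}
    (hd : ∀ n, ∃ w : NeWord M j j, w.prod = d ^ (n + 1)) {F : Set (CoprodI M)} (hF : F.Finite)
    (h1 : 1 ∉ F) : ∃ k : ℕ, ∀ f ∈ F, (d ^ k)⁻¹ * f * d ^ k ∈ endsIn j := by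
  -- Otherwise some `f ∈ F` is bad for two exponents `k < l`, but being bad for `k` makes it good
  -- for `l` by `inv_mul_mul_mem_endsIn`.
  by_contra! hbad
  choose f hfF hf using hbad
  have := hF.to_subtype
  obtain ⟨k, l, hkl, hfkl⟩ := Finite.exists_ne_map_eq_of_infinite fun k : ℕ => (⟨f k, hfF k⟩ : F)
  wlog hlt : k < l generalizing k l
  · exact this l k hkl.symm hfkl.symm (hkl.lt_or_gt.resolve_left hlt)
  obtain ⟨m, rfl⟩ := Nat.exists_eq_add_of_lt hlt
  obtain ⟨w, hw⟩ := hd m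
  have hne : (d ^ k)⁻¹ * f k * d ^ k ≠ 1 := by
    simpa using (conj_eq_one_iff (a := (d ^ k)⁻¹)).not.2 fun h => h1 (h ▸ hfF k)
  have hfl : f (k + m + 1) = f k := congrArg Subtype.val hfkl.symm
  apply hf (k + m + 1)
  rw [hfl]
  convert inv_mul_mul_mem_endsIn (hf k) hne w using 1
  rw [hw]
  group

theorem hasPowersPartition_of_forall_neWord {i j : ι} (hij : i ≠ j) {F : Set (CoprodI M)}
    (hF : ∀ f ∈ F, ∃ w : NeWord M j j, w.prod = f) {e : CoprodI M}
    (he : ∀ n, ∃ w : NeWord M i i, w.prod = e ^ (n + 1)) (N : ℕ) : HasPowersPartition F N := by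
  have hpow (k l : ℕ) (hkl : k < l) (u u' : CoprodI M) (hu : u ∉ startsIn i)
      (hu' : u' ∉ startsIn i) : e ^ k * u ≠ e ^ l * u' := by
    intro h
    obtain ⟨m, rfl⟩ := Nat.exists_eq_add_of_lt hkl
    obtain ⟨w, hw⟩ := he m
    rw [add_assoc, pow_add, mul_assoc, ← hw] at h
    exact hu (mul_left_cancel h ▸ w.prod_mul_mem_startsIn hu')
  refine ⟨startsIn i, (startsIn i)ᶜ, fun k => e ^ (k : ℕ), Set.union_compl_self _,
    disjoint_compl_right, ?_, ?_⟩
  · intro f hf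
    obtain ⟨w, rfl⟩ := hF f hf
    rw [Set.disjoint_left]
    rintro _ ⟨u, hu, rfl⟩
    exact Set.disjoint_right.1 (disjoint_startsIn hij)
      (w.prod_mul_mem_startsIn (Set.disjoint_left.1 (disjoint_startsIn hij) hu))
  · intro k l hkl
    rw [Set.disjoint_left]
    rintro _ ⟨u, hu, rfl⟩ ⟨u', hu', h⟩
    rcases (Fin.val_injective.ne hkl).lt_or_gt with hlt | hlt
    · exact hpow _ _ hlt u u' hu hu' h.symm
    · exact hpow _ _ hlt u' u hu' hu h

theorem exists_neWord_eq_of_mem_endsIn {j : ι} {g : CoprodI M} (hg : g ∈ endsIn j)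
    (hg' : g⁻¹ ∈ endsIn j) : ∃ w : NeWord M j j, w.prod = g := by
  obtain ⟨i, v, rfl⟩ := hg
  obtain ⟨i', u, hu⟩ := hg'
  obtain ⟨-, rfl⟩ := NeWord.eq_of_prod_eq (v.inv_prod.trans hu.symm)
  exact ⟨v, rfl⟩

theorem isPowersGroup {i j : ι} (hij : i ≠ j) [Nontrivial (M i)]
    (hj : ∃ a b c : M j, a ≠ b ∧ a ≠ c ∧ b ≠ c) : IsPowersGroup (CoprodI M) := by
  obtain ⟨x, hx⟩ := exists_ne (1 : M i)
  obtain ⟨y, y', hy, hy', hyy'⟩ := exists_ne_one_mul_ne_one hj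
  set d : CoprodI M := of y * of x * of y'
  have hd (n : ℕ) : ∃ w : NeWord M j j, w.prod = d ^ (n + 1) :=
    (exists_neWord_prod_eq_pow hij hx hy hy' hyy' n).imp fun _ => And.right
  have he (n : ℕ) : ∃ w : NeWord M i i, w.prod = (of x * d * (of x)⁻¹) ^ (n + 1) := by
    obtain ⟨w, hw⟩ := hd n
    exact ⟨.append (.singleton x hx) hij (.append w hij.symm (.singleton x⁻¹ (inv_ne_one.2 hx))),
      by rw [conj_pow, ← hw]; simp [mul_assoc]⟩
  intro F h1 N _
  obtain ⟨k, hk⟩ := exists_conj_pow_mem_endsIn hd (F.finite_toSet.union F.finite_toSet.inv)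
    (by simpa using h1)
  refine HasPowersPartition.of_image_mulEquiv (MulAut.conj (d ^ k)⁻¹)
    (hasPowersPartition_of_forall_neWord hij ?_ he N)
  rintro _ ⟨f, hf, rfl⟩
  rw [MulAut.conj_apply, inv_inv]
  refine exists_neWord_eq_of_mem_endsIn (hk f (Or.inl hf)) ?_
  convert hk f⁻¹ (Or.inr (by simpa using hf)) using 1
  group

end Group

end Monoid.CoprodI

section BoolFamily

universe u v

-- `ULift` puts both factors in one universe, so that `Coprod G₁ G₂` becomes a `CoprodI` over `Bool`.
def boolFamily (G₁ : Type u) (G₂ : Type v) : Bool → Type max u v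
  | true => ULift G₁
  | false => ULift G₂

variable {G₁ : Type u} {G₂ : Type v} [Group G₁] [Group G₂]

instance : ∀ b, Group (boolFamily G₁ G₂ b)
  | true => inferInstanceAs (Group (ULift G₁))
  | false => inferInstanceAs (Group (ULift G₂))

instance [Nontrivial G₁] [Nontrivial G₂] : ∀ b, Nontrivial (boolFamily G₁ G₂ b)
  | true => ULift.nontrivial
  | false => ULift.nontrivial

open Monoid in
def coprodIBoolFamilyEquiv : CoprodI (boolFamily G₁ G₂) ≃* Coprod G₁ G₂ :=
  MonoidHom.toMulEquiv
    (CoprodI.lift fun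
      | true => Coprod.inl.comp MulEquiv.ulift.toMonoidHom
      | false => Coprod.inr.comp MulEquiv.ulift.toMonoidHom)
    (Coprod.lift ((CoprodI.of (i := true)).comp MulEquiv.ulift.symm.toMonoidHom)
      ((CoprodI.of (i := false)).comp MulEquiv.ulift.symm.toMonoidHom))
    (CoprodI.ext_hom _ _ fun b => by cases b <;> ext <;> rfl)
    (Coprod.hom_ext (by ext; rfl) (by ext; rfl))

end BoolFamily

/-- A free product `Γ₁ ∗ Γ₂` with `(|Γ₁| − 1)(|Γ₂| − 1) ≥ 2`, i.e. with both factors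
nontrivial and at least one of them of cardinality at least three, is a Powers group. -/
theorem isPowersGroup_coprod {Γ₁ Γ₂ : Type*} [Group Γ₁] [Group Γ₂]
    [Nontrivial Γ₁] [Nontrivial Γ₂]
    (hbig : (∃ a b c : Γ₁, a ≠ b ∧ a ≠ c ∧ b ≠ c) ∨ ∃ a b c : Γ₂, a ≠ b ∧ a ≠ c ∧ b ≠ c) :
    IsPowersGroup (Monoid.Coprod Γ₁ Γ₂) := by
  refine IsPowersGroup.of_mulEquiv coprodIBoolFamilyEquiv ?_
  rcases hbig with ⟨a, b, c, hab, hac, hbc⟩ | ⟨a, b, c, hab, hac, hbc⟩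
  · exact Monoid.CoprodI.isPowersGroup (M := boolFamily Γ₁ Γ₂) Bool.false_ne_true
      ⟨ULift.up a, ULift.up b, ULift.up c, ULift.up_injective.ne hab, ULift.up_injective.ne hac,
        ULift.up_injective.ne hbc⟩
  · exact Monoid.CoprodI.isPowersGroup (M := boolFamily Γ₁ Γ₂) Bool.false_ne_true.symm
      ⟨ULift.up a, ULift.up b, ULift.up c, ULift.up_injective.ne hab, ULift.up_injective.ne hac,
        ULift.up_injective.ne hbc⟩
end
end

section
/- Let G be a topological group and let φ : G → ℂ be a function with φ(1) = 1. Suppose that for every compact subset Q of G and every ε > 0 there exist finitely many functions of positive type ψ₁, …, ψ_n on G such that |φ(g) − Σ_{j=1}^n ψ_j(g)| ≤ ε for all g ∈ Q (i.e. φ is a limit, uniformly on compact subsets of G, of finite sums of functions of positive type). Then for every compact subset Q of G and every ε > 0 there exist finitely many functions of positive type χ₁, …, χ_n on G with χ_j(1) = 1 and real coefficients c₁, …, c_n ≥ 0 with Σ_{j=1}^n c_j = 1 such that |φ(g) − Σ_{j=1}^n c_j χ_j(g)| ≤ ε for all g ∈ Q (i.e. φ is a limit, uniformly on compact subsets of G,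 of convex combinations of functions of positive type normalized at the identity). -/
/-!
The 2 × 2 case of the defining inequality gives `ψ(g⁻¹) = conj ψ(g)` and `|ψ(g)| ≤ ψ(1)`, so a
function of positive type is `ψ(1)` times a normalized one (it vanishes if `ψ(1) = 0`).
Approximating `φ` by `∑ ψⱼ` on `Q ∪ {1}` within `δ ≤ 1/2` forces `S = ∑ ψⱼ(1)` to be `δ`-close
to `φ(1) = 1`, in particular positive; then `(∑ ψⱼ) / S` is a convex combination of normalized functions of positive type,
and since `|∑ ψⱼ(g)| ≤ S`, dividing by `S` moves the sum by at most `|1 - S| ≤ δ`.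
-/

noncomputable section

open scoped ENNReal

open scoped ComplexOrder

def IsOfPositiveType {G : Type*} [Group G] (ψ : G → ℂ) : Prop :=
  ∀ (n : ℕ) (g : Fin n → G) (lam : Fin n → ℂ),
    0 ≤ ∑ j : Fin n, ∑ k : Fin n, ψ ((g j)⁻¹ * g k) * (starRingEnd ℂ) (lam j) * lam k

namespace IsOfPositiveType

variable {G : Type*} [Group G] {ψ : G → ℂ}

theorem const_one : IsOfPositiveType (fun _ : G => (1 : ℂ)) := by
  intro n g lam
  have hsum : ∑ j, ∑ k, (1 : ℂ) * (starRingEnd ℂ) (lam j) * lam k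
      = star (∑ j, lam j) * ∑ k, lam k := by
    simp only [one_mul, star_sum, Finset.sum_mul_sum]
    rfl
  exact hsum ▸ star_mul_self_nonneg _

theorem const_mul (h : IsOfPositiveType ψ) {c : ℂ} (hc : 0 ≤ c) :
    IsOfPositiveType (fun g => c * ψ g) := by
  intro n g lam
  have hsum : ∑ j, ∑ k, c * ψ ((g j)⁻¹ * g k) * (starRingEnd ℂ) (lam j) * lam k
      = c * ∑ j, ∑ k, ψ ((g j)⁻¹ * g k) * (starRingEnd ℂ) (lam j) * lam k := by
    simp only [Finset.mul_sum, mul_assoc]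
  exact hsum ▸ mul_nonneg hc (h n g lam)

theorem map_one_nonneg (h : IsOfPositiveType ψ) : 0 ≤ ψ 1 := by
  simpa using h 1 (fun _ => 1) (fun _ => 1)

theorem map_one_re_nonneg (h : IsOfPositiveType ψ) : 0 ≤ (ψ 1).re :=
  (Complex.le_def.mp h.map_one_nonneg).1

theorem map_one_eq_re (h : IsOfPositiveType ψ) : ψ 1 = (ψ 1).re :=
  Complex.eq_re_of_ofReal_le h.map_one_nonneg

theorem two_point_nonneg (h : IsOfPositiveType ψ) (g : G) (lam : ℂ) :
    0 ≤ ψ 1 * (1 + (starRingEnd ℂ) lam * lam) + ψ g * lam + ψ g⁻¹ * (starRingEnd ℂ) lam := by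
  have hquad := h 2 ![1, g] ![1, lam]
  simp only [Fin.sum_univ_two, Matrix.cons_val_zero, Matrix.cons_val_one,
    inv_one, one_mul, mul_one, inv_mul_cancel, map_one] at hquad
  convert hquad using 1
  ring

theorem map_inv (h : IsOfPositiveType ψ) (g : G) : ψ g⁻¹ = (starRingEnd ℂ) (ψ g) := by
  -- A nonnegative complex number is real: the imaginary parts at `λ = 1` and `λ = i` give
  -- `im ψ(g⁻¹) = -im ψ(g)` and `re ψ(g⁻¹) = re ψ(g)`.
  have h1 := (Complex.le_def.mp (h.two_point_nonneg g 1)).2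
  have hI := (Complex.le_def.mp (h.two_point_nonneg g Complex.I)).2
  have h0 := (Complex.le_def.mp h.map_one_nonneg).2
  simp only [Complex.add_im, Complex.mul_im, Complex.add_re, Complex.conj_re, Complex.conj_im,
    Complex.one_re, Complex.one_im, Complex.I_re, Complex.I_im, Complex.conj_I, Complex.neg_im,
    Complex.zero_im, Complex.mul_re, Complex.neg_re] at h1 hI h0
  apply Complex.ext <;> simp only [Complex.conj_re, Complex.conj_im] <;> linarith

theorem two_point_re_nonneg (h : IsOfPositiveType ψ) (g : G) (lam : ℂ) :
    0 ≤ (ψ 1).re * (1 + ‖lam‖ ^ 2) + 2 * (ψ g * lam).re := by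
  have hquad := h.two_point_nonneg g lam
  rw [h.map_inv, h.map_one_eq_re, Complex.conj_mul', ← map_mul, add_assoc,
    Complex.add_conj] at hquad
  exact_mod_cast hquad

theorem norm_le (h : IsOfPositiveType ψ) (g : G) : ‖ψ g‖ ≤ (ψ 1).re := by
  rcases eq_or_ne (ψ g) 0 with hg | hg
  · simpa [hg] using h.map_one_re_nonneg
  have hpos : 0 < ‖ψ g‖ := norm_pos_iff.mpr hg
  set lam : ℂ := -(starRingEnd ℂ) (ψ g) / ‖ψ g‖
  have hnorm : ‖lam‖ = 1 := by
    rw [norm_div, norm_neg, Complex.norm_conj, Complex.norm_real, Real.norm_of_nonneg hpos.le,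
      div_self hpos.ne']
  have hre : (ψ g * lam).re = -‖ψ g‖ := by
    rw [mul_div_assoc', mul_neg, Complex.mul_conj', ← Complex.ofReal_pow, ← Complex.ofReal_neg,
      ← Complex.ofReal_div, Complex.ofReal_re]
    field_simp
  have hquad := h.two_point_re_nonneg g lam
  rw [hnorm, hre] at hquad
  linarith

theorem eq_zero_of_map_one_re_eq_zero (h : IsOfPositiveType ψ) (h1 : (ψ 1).re = 0) (g : G) :
    ψ g = 0 :=
  norm_le_zero_iff.mp (h1 ▸ h.norm_le g)

theorem exists_normalized (h : IsOfPositiveType ψ) :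
    ∃ χ : G → ℂ, IsOfPositiveType χ ∧ χ 1 = 1 ∧ ∀ g, ψ g = (ψ 1).re * χ g := by
  by_cases h1 : (ψ 1).re = 0
  · exact ⟨fun _ => 1, const_one, rfl,
      fun g => by simp [h1, h.eq_zero_of_map_one_re_eq_zero h1 g]⟩
  refine ⟨fun g => ((ψ 1).re⁻¹ : ℝ) * ψ g,
    h.const_mul (Complex.zero_le_real.mpr (inv_nonneg.mpr h.map_one_re_nonneg)), ?_, fun g => ?_⟩
  · show ((ψ 1).re⁻¹ : ℝ) * ψ 1 = 1
    nth_rw 2 [h.map_one_eq_re]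
    rw [← Complex.ofReal_mul, inv_mul_cancel₀ h1, Complex.ofReal_one]
  · rw [← mul_assoc, ← Complex.ofReal_mul, mul_inv_cancel₀ h1, Complex.ofReal_one, one_mul]

end IsOfPositiveType

theorem norm_sub_div_le {z F : ℂ} {S : ℝ} (hS : 0 < S) (hF : ‖F‖ ≤ S) :
    ‖z - F / S‖ ≤ ‖z - F‖ + |1 - S| := by
  have hsplit : z - F / S = (z - F) + F / S * (S - 1) := by
    field_simp
    ring
  have hsmall : ‖F / S * (S - 1 : ℝ)‖ ≤ |1 - S| := by
    rw [norm_mul, norm_div, Complex.norm_real, Complex.norm_real, Real.norm_of_nonneg hS.le,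
      Real.norm_eq_abs, abs_sub_comm]
    exact mul_le_of_le_one_left (abs_nonneg _) ((div_le_one hS).mpr hF)
  calc ‖z - F / S‖ ≤ ‖z - F‖ + ‖F / S * (S - 1 : ℝ)‖ := by
        rw [hsplit]; push_cast; exact norm_add_le _ _
    _ ≤ ‖z - F‖ + |1 - S| := by gcongr

section

variable {G : Type*} [Group G] {ι : Type*} [Fintype ι] {ψ : ι → G → ℂ}

theorem sum_map_one_of_isOfPositiveType (hψ : ∀ j, IsOfPositiveType (ψ j)) :
    ∑ j, ψ j 1 = ((∑ j, (ψ j 1).re : ℝ) : ℂ) := by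
  push_cast
  exact Finset.sum_congr rfl fun j _ => (hψ j).map_one_eq_re

theorem norm_sum_le_of_isOfPositiveType (hψ : ∀ j, IsOfPositiveType (ψ j)) (g : G) :
    ‖∑ j, ψ j g‖ ≤ ∑ j, (ψ j 1).re :=
  (norm_sum_le _ _).trans (Finset.sum_le_sum fun j _ => (hψ j).norm_le g)

theorem exists_convex_combination_eq_sum_div (hψ : ∀ j, IsOfPositiveType (ψ j))
    (hS : 0 < ∑ j, (ψ j 1).re) :
    ∃ (χ : ι → G → ℂ) (c : ι → ℝ), (∀ j, IsOfPositiveType (χ j)) ∧ (∀ j, χ j 1 = 1) ∧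
      (∀ j, 0 ≤ c j) ∧ ∑ j, c j = 1 ∧
      ∀ g, ∑ j, (c j : ℂ) * χ j g = (∑ j, ψ j g) / ((∑ j, (ψ j 1).re : ℝ) : ℂ) := by
  choose χ hχ hχ1 hψχ using fun j => (hψ j).exists_normalized
  refine ⟨χ, fun j => (ψ j 1).re / ∑ j, (ψ j 1).re, hχ, hχ1,
    fun j => div_nonneg (hψ j).map_one_re_nonneg hS.le,
    by rw [← Finset.sum_div, div_self hS.ne'], fun g => ?_⟩
  simp only [hψχ _ g, Finset.sum_div, Complex.ofReal_div]
  exact Finset.sum_congr rfl fun j _ => by ring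

end

theorem convex_combination_of_sums_of_positiveType_general
    {G : Type*} [Group G] [TopologicalSpace G]
    (φ : G → ℂ) (hφ1 : φ 1 = 1)
    (h : ∀ Q : Set G, IsCompact Q → ∀ ε : ℝ, 0 < ε →
      ∃ (n : ℕ) (ψ : Fin n → G → ℂ), (∀ j, IsOfPositiveType (ψ j)) ∧
        ∀ g ∈ Q, ‖φ g - ∑ j : Fin n, ψ j g‖ ≤ ε) :
    ∀ Q : Set G, IsCompact Q → ∀ ε : ℝ, 0 < ε →
      ∃ (n : ℕ) (χ : Fin n → G → ℂ) (c : Fin n → ℝ),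
        (∀ j, IsOfPositiveType (χ j)) ∧ (∀ j, χ j 1 = 1) ∧
        (∀ j, 0 ≤ c j) ∧ (∑ j : Fin n, c j) = 1 ∧
        ∀ g ∈ Q, ‖φ g - ∑ j : Fin n, (c j : ℂ) * χ j g‖ ≤ ε := by
  intro Q hQ ε hε
  set δ := min (ε / 2) (1 / 2)
  obtain ⟨n, ψ, hψ, hclose⟩ := h (insert 1 Q) (hQ.insert 1) δ (by positivity)
  set S := ∑ j, (ψ j 1).re
  have hS1 : |1 - S| ≤ δ := by
    have hclose1 := hclose 1 (Set.mem_insert 1 Q)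
    rwa [hφ1, sum_map_one_of_isOfPositiveType hψ, ← Complex.ofReal_one, ← Complex.ofReal_sub,
      Complex.norm_real, Real.norm_eq_abs] at hclose1
  have hSpos : 0 < S := by linarith [(abs_le.mp hS1).2, min_le_right (ε / 2) (1 / 2)]
  obtain ⟨χ, c, hχ, hχ1, hc0, hc1, hsum⟩ := exists_convex_combination_eq_sum_div hψ hSpos
  refine ⟨n, χ, c, hχ, hχ1, hc0, hc1, fun g hg => ?_⟩
  calc ‖φ g - ∑ j, (c j : ℂ) * χ j g‖ ≤ ‖φ g - ∑ j, ψ j g‖ + |1 - S| := by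
        rw [hsum]
        exact norm_sub_div_le hSpos (norm_sum_le_of_isOfPositiveType hψ g)
    _ ≤ δ + δ := add_le_add (hclose g (Set.mem_insert_of_mem 1 hg)) hS1
    _ ≤ ε := by linarith [min_le_left (ε / 2) (1 / 2)]

/-- If a function `φ` on a topological group, with `φ(1) = 1`, is a limit, uniformly on
compact subsets, of finite sums of functions of positive type, then it is also a limit,
uniformly on compact subsets, of convex combinations of functions of positive type
normalized at the identity. -/
theorem convex_combination_of_sums_of_positiveType
    {G : Type*} [Group G] [TopologicalSpace G] [IsTopologicalGroup G]
    (φ : G → ℂ) (hφ1 : φ 1 = 1)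
    (h : ∀ Q : Set G, IsCompact Q → ∀ ε : ℝ, 0 < ε →
      ∃ (n : ℕ) (ψ : Fin n → G → ℂ), (∀ j, IsOfPositiveType (ψ j)) ∧
        ∀ g ∈ Q, ‖φ g - ∑ j : Fin n, ψ j g‖ ≤ ε) :
    ∀ Q : Set G, IsCompact Q → ∀ ε : ℝ, 0 < ε →
      ∃ (n : ℕ) (χ : Fin n → G → ℂ) (c : Fin n → ℝ),
        (∀ j, IsOfPositiveType (χ j)) ∧ (∀ j, χ j 1 = 1) ∧
        (∀ j, 0 ≤ c j) ∧ (∑ j : Fin n, c j) = 1 ∧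
        ∀ g ∈ Q, ‖φ g - ∑ j : Fin n, (c j : ℂ) * χ j g‖ ≤ ε :=
  convex_combination_of_sums_of_positiveType_general φ hφ1 h
end
end
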